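/- arXiv:2601.21153 — 2 statements merged into one kernel-verified Lean document; each statement's English description precedes it below -/
import Mathlib

section
/- Let W_1, ..., W_{n+1} be i.i.d. real-valued random variables and let 1 ≤ l < r ≤ n. If (r − l)/(n + 1) ≥ 1 − α, then P(W_{(l)} ≤ W_{n+1} ≤ W_{(r)}) ≥ 1 − α, where W_{(k)} denotes the k-th order statistic of W_1, ..., W_n. -/
open MeasureTheory ProbabilityTheory
open scoped ENNReal

/-- The `r`-th order statistic (1-indexed) of `w 1, ..., w n`. -/
noncomputable def orderStat {n : ℕ} (w : Fin n → ℝ) (r : ℕ) : ℝ :=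
  ((List.ofFn w).insertionSort (· ≤ ·)).getD (r - 1) 0


lemma sorted_getD_iff {s : List ℝ} (hs : s.Pairwise (· ≤ ·)) (p : ℝ → Prop) [DecidablePred p]
    (hp : ∀ a b, a ≤ b → p b → p a) (k : ℕ) (hk1 : 1 ≤ k) (hk : k ≤ s.length) :
    p (s.getD (k-1) 0) ↔ k ≤ s.countP (fun a => decide (p a)) := by
  have hlt : k - 1 < s.length := by omega
  rw [s.getD_eq_getElem 0 hlt]
  constructor
  · intro hpk
    calc k = (s.take k).length := by simp [hk]
    _ = (s.take k).countP (fun a => decide (p a)) := by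
        symm
        rw [List.countP_eq_length]
        intro a ha
        obtain ⟨i, hi, rfl⟩ := List.mem_take_iff_getElem.mp ha
        have hi' : i < s.length := lt_of_lt_of_le (lt_min_iff.mp hi).1 (by omega)
        have : s.get ⟨i, hi'⟩ ≤ s.get ⟨k-1, hlt⟩ := by
          apply hs.rel_get_of_le
          simp only [Fin.mk_le_mk]
          have := (lt_min_iff.mp hi).2
          omega
        simp only [List.get_eq_getElem] at this
        simpa using decide_eq_true (hp _ _ this hpk)
    _ ≤ s.countP (fun a => decide (p a)) := (s.take_sublist k).countP_le
  · intro hcnt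
    by_contra hpk
    have hsplit := s.take_append_drop (k-1)
    have h0 : (s.drop (k-1)).countP (fun a => decide (p a)) = 0 := by
      rw [List.countP_eq_zero]
      intro a ha
      obtain ⟨i, hi, rfl⟩ := List.mem_drop_iff_getElem.mp ha
      simp only [decide_eq_true_eq]
      intro hpa
      have hle : s.get ⟨k-1, hlt⟩ ≤ s.get ⟨k-1+i, by omega⟩ :=
        hs.rel_get_of_le (by simp only [Fin.mk_le_mk]; omega)
      simp only [List.get_eq_getElem] at hle
      exact hpk (hp _ _ hle hpa)
    have hadd := List.countP_append (l₁ := s.take (k-1)) (l₂ := s.drop (k-1)) (p := fun a => decide (p a))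
    rw [hsplit] at hadd
    have hle : (s.take (k-1)).countP (fun a => decide (p a)) ≤ k - 1 :=
      List.countP_le_length.trans (by simp)
    omega


lemma countP_ofFn' {n : ℕ} (w : Fin n → ℝ) (p : ℝ → Prop) [DecidablePred p] :
    (List.ofFn w).countP (fun a => decide (p a)) = (Finset.univ.filter fun i => p (w i)).card := by
  classical
  rw [List.ofFn_eq_map, List.countP_map]
  have huniv : (Finset.univ : Finset (Fin n)) = ⟨↑(List.finRange n), List.nodup_finRange n⟩ :=
    Fin.univ_def n
  rw [huniv]
  simp only [Finset.filter, Finset.card, Multiset.filter_coe, Multiset.coe_card,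
    List.countP_eq_length_filter]
  congr 1

lemma orderStat_basic {n : ℕ} (w : Fin n → ℝ) (k : ℕ) (hk1 : 1 ≤ k) (hk2 : k ≤ n)
    (p : ℝ → Prop) [DecidablePred p] (hp : ∀ a b, a ≤ b → p b → p a) :
    p (orderStat w k) ↔ k ≤ (Finset.univ.filter fun i => p (w i)).card := by
  have hperm := (List.ofFn w).perm_insertionSort (· ≤ ·)
  have hlen : ((List.ofFn w).insertionSort (· ≤ ·)).length = n := by
    simpa using hperm.length_eq
  rw [orderStat, sorted_getD_iff (List.pairwise_insertionSort _ _) p hp k hk1 (by omega),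
    hperm.countP_eq, countP_ofFn']

lemma orderStat_le_iff {n : ℕ} (w : Fin n → ℝ) (k : ℕ) (hk1 : 1 ≤ k) (hk2 : k ≤ n) (t : ℝ) :
    orderStat w k ≤ t ↔ k ≤ (Finset.univ.filter fun i => w i ≤ t).card :=
  orderStat_basic w k hk1 hk2 (· ≤ t) (fun _ _ hab hb => hab.trans hb)

lemma le_orderStat_iff {n : ℕ} (w : Fin n → ℝ) (k : ℕ) (hk1 : 1 ≤ k) (hk2 : k ≤ n) (t : ℝ) :
    t ≤ orderStat w k ↔ (Finset.univ.filter fun i => w i < t).card < k := by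
  rw [← not_lt, orderStat_basic w k hk1 hk2 (· < t) (fun _ _ hab hb => lt_of_le_of_lt hab hb),
    not_le]

lemma orderStat_congr {n : ℕ} {v w : Fin n → ℝ} (h : (List.ofFn v).Perm (List.ofFn w)) :
    orderStat v = orderStat w := by
  funext k
  unfold orderStat
  rw [List.Perm.eq_of_pairwise'
    (List.pairwise_insertionSort _ _) (List.pairwise_insertionSort _ _)
    (((List.ofFn v).perm_insertionSort (· ≤ ·)).trans
      (h.trans ((List.ofFn w).perm_insertionSort (· ≤ ·)).symm))]

lemma ofFn_succAbove_perm {n : ℕ} (x : Fin (n+1) → ℝ) (j : Fin (n+1)) :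
    (List.ofFn (fun i : Fin n => x (j.succAbove i))).Perm
      (List.ofFn (fun i : Fin n => x (Equiv.swap j (Fin.last n) i.castSucc))) := by
  have h1 : (List.ofFn (j.succAbove)).Perm
      (List.ofFn (fun i : Fin n => Equiv.swap j (Fin.last n) i.castSucc)) := by
    apply List.perm_of_nodup_nodup_toFinset_eq
    · exact List.nodup_ofFn.mpr Fin.succAbove_right_injective
    · exact List.nodup_ofFn.mpr
        ((Equiv.injective _).comp (Fin.castSucc_injective n))
    · ext k
      simp only [List.mem_toFinset, List.mem_ofFn, Set.mem_range]
      rw [Fin.exists_succAbove_eq_iff]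
      constructor
      · intro hk
        obtain ⟨i, hi⟩ := Fin.exists_castSucc_eq.mpr
          (show Equiv.swap j (Fin.last n) k ≠ Fin.last n by
            intro h
            apply hk
            have := congrArg (Equiv.swap j (Fin.last n)) h
            simpa using this)
        exact ⟨i, by rw [hi]; exact Equiv.swap_apply_self j (Fin.last n) k⟩
      · rintro ⟨i, rfl⟩
        intro h
        have := congrArg (Equiv.swap j (Fin.last n)) h
        simp only [Equiv.swap_apply_self, Equiv.swap_apply_left] at this
        exact absurd this (Fin.castSucc_lt_last i).ne
  have h2 := h1.map x
  rw [List.map_ofFn, List.map_ofFn] at h2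
  exact h2

lemma card_cov_ge {n l r : ℕ} (hrn : r ≤ n) (x : Fin (n+1) → ℝ) :
    (r - l : ℕ) ≤ (Finset.univ.filter fun j : Fin (n+1) =>
      l ≤ (Finset.univ.filter fun i : Fin (n+1) => i ≠ j ∧ x i ≤ x j).card ∧
      (Finset.univ.filter fun i : Fin (n+1) => i ≠ j ∧ x i < x j).card < r).card := by
  classical
  set S : Fin (n+1) → Finset (Fin (n+1)) :=
    fun j => Finset.univ.filter (fun i => x i < x j ∨ (x i = x j ∧ i < j)) with hS
  have hne : ∀ j i, i ∈ S j → i ≠ j := by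
    intro j i hi
    simp only [hS, Finset.mem_filter] at hi
    rcases hi.2 with h | h
    · exact fun he => absurd (he ▸ h) (lt_irrefl _)
    · exact h.2.ne
  have hρlt : ∀ j, (S j).card < n + 1 := by
    intro j
    have : S j ⊆ Finset.univ.erase j := fun i hi =>
      Finset.mem_erase.mpr ⟨hne j i hi, Finset.mem_univ i⟩
    have := Finset.card_le_card this
    rw [Finset.card_erase_of_mem (Finset.mem_univ j)] at this
    simp only [Finset.card_univ, Fintype.card_fin] at this
    omega
  set ρ : Fin (n+1) → Fin (n+1) := fun j => ⟨(S j).card, hρlt j⟩ with hρ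
  have hmono : ∀ j j', (x j < x j' ∨ (x j = x j' ∧ j < j')) → (S j).card < (S j').card := by
    intro j j' h
    apply Finset.card_lt_card
    have hsub : S j ⊆ S j' := by
      intro i hi
      simp only [hS, Finset.mem_filter, Finset.mem_univ, true_and] at hi ⊢
      rcases h with h | ⟨he, hj⟩
      · rcases hi with h1 | ⟨h1, _⟩
        · exact Or.inl (h1.trans h)
        · exact Or.inl (h1 ▸ h)
      · rcases hi with h1 | ⟨h1, h2⟩
        · exact Or.inl (he ▸ h1)
        · exact Or.inr ⟨he ▸ h1, h2.trans hj⟩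
    rw [Finset.ssubset_iff_of_subset hsub]
    refine ⟨j, ?_, fun hj => (hne j j hj) rfl⟩
    simp only [hS, Finset.mem_filter, Finset.mem_univ, true_and]
    rcases h with h | ⟨he, hj⟩
    · exact Or.inl h
    · exact Or.inr ⟨he, hj⟩
  have hinj : Function.Injective ρ := by
    intro j j' h
    by_contra hnej
    have hv : (S j).card = (S j').card := by
      simpa [hρ, Fin.ext_iff] using h
    rcases lt_trichotomy (x j) (x j') with h1 | h1 | h1
    · exact absurd hv (hmono j j' (Or.inl h1)).ne
    · rcases lt_or_gt_of_ne hnej with h2 | h2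
      · exact absurd hv (hmono j j' (Or.inr ⟨h1, h2⟩)).ne
      · exact absurd hv.symm (hmono j' j (Or.inr ⟨h1.symm, h2⟩)).ne
    · exact absurd hv.symm (hmono j' j (Or.inl h1)).ne
  have hsurj : Function.Surjective ρ := (Finite.injective_iff_surjective.mp hinj)
  have key : ∀ j : Fin (n+1), l ≤ (ρ j : ℕ) ∧ (ρ j : ℕ) < r →
      l ≤ (Finset.univ.filter fun i : Fin (n+1) => i ≠ j ∧ x i ≤ x j).card ∧
      (Finset.univ.filter fun i : Fin (n+1) => i ≠ j ∧ x i < x j).card < r := by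
    intro j ⟨h1, h2⟩
    constructor
    · refine (show l ≤ (S j).card from h1).trans (Finset.card_le_card ?_)
      intro i hi
      have hij := hne j i hi
      simp only [hS, Finset.mem_filter, Finset.mem_univ, true_and] at hi ⊢
      exact ⟨hij, by rcases hi with h | ⟨h, _⟩; exacts [h.le, h.le]⟩
    · refine lt_of_le_of_lt (Finset.card_le_card ?_) (show (S j).card < r from h2)
      intro i hi
      simp only [hS, Finset.mem_filter, Finset.mem_univ, true_and] at hi ⊢
      exact Or.inl hi.2
  have h1 : (Finset.univ.filter fun j : Fin (n+1) => l ≤ (ρ j : ℕ) ∧ (ρ j : ℕ) < r).card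
      = (Finset.univ.filter fun k : Fin (n+1) => l ≤ (k : ℕ) ∧ (k : ℕ) < r).card := by
    apply Finset.card_bij (fun j _ => ρ j)
    · intro j hj
      simpa using (Finset.mem_filter.mp hj).2
    · intro j _ j' _ h
      exact hinj h
    · intro k hk
      obtain ⟨j, rfl⟩ := hsurj k
      exact ⟨j, Finset.mem_filter.mpr ⟨Finset.mem_univ j,
        by simpa using (Finset.mem_filter.mp hk).2⟩, rfl⟩
  have h2 : (Finset.univ.filter fun k : Fin (n+1) => l ≤ (k : ℕ) ∧ (k : ℕ) < r).card
      = r - l := by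
    rw [← Nat.card_Ico l r]
    refine Finset.card_bij (fun k _ => (k : ℕ)) ?_ ?_ ?_
    · intro k hk
      simp only [Finset.mem_filter] at hk
      exact Finset.mem_Ico.mpr hk.2
    · intro k _ k' _ h
      exact Fin.ext h
    · intro m hm
      rw [Finset.mem_Ico] at hm
      exact ⟨⟨m, by omega⟩, Finset.mem_filter.mpr ⟨Finset.mem_univ _, hm.1, hm.2⟩, rfl⟩
  calc r - l = _ := h2.symm
  _ = _ := h1.symm
  _ ≤ _ := Finset.card_le_card (Finset.monotone_filter_right _ (fun j _ => key j))

lemma card_succAbove {n : ℕ} (x : Fin (n+1) → ℝ) (j : Fin (n+1)) (Q : ℝ → Prop)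
    [DecidablePred Q] :
    (Finset.univ.filter fun i : Fin n => Q (x (j.succAbove i))).card
      = (Finset.univ.filter fun i : Fin (n+1) => i ≠ j ∧ Q (x i)).card := by
  refine Finset.card_bij (fun i _ => j.succAbove i) ?_ ?_ ?_
  · intro i hi
    simp only [Finset.mem_filter, Finset.mem_univ, true_and] at hi ⊢
    exact ⟨Fin.succAbove_ne j i, hi⟩
  · intro i _ i' _ h
    exact Fin.succAbove_right_injective h
  · intro k hk
    simp only [Finset.mem_filter, Finset.mem_univ, true_and] at hk
    obtain ⟨i, rfl⟩ := Fin.exists_succAbove_eq_iff.mpr hk.1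
    exact ⟨i, by simp [hk.2], rfl⟩

lemma cov_iff {n l r : ℕ} (hl : 1 ≤ l) (hln : l ≤ n) (hr : 1 ≤ r) (hrn : r ≤ n)
    (x : Fin (n+1) → ℝ) (j : Fin (n+1)) :
    (orderStat (fun i : Fin n => x (j.succAbove i)) l ≤ x j ∧
      x j ≤ orderStat (fun i : Fin n => x (j.succAbove i)) r)
    ↔ (l ≤ (Finset.univ.filter fun i : Fin (n+1) => i ≠ j ∧ x i ≤ x j).card ∧
      (Finset.univ.filter fun i : Fin (n+1) => i ≠ j ∧ x i < x j).card < r) := by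
  rw [orderStat_le_iff _ l hl hln, le_orderStat_iff _ r hr hrn,
    card_succAbove x j (fun a => a ≤ x j), card_succAbove x j (fun a => a < x j)]

lemma cov_swap {n l r : ℕ} (x : Fin (n+1) → ℝ) (j : Fin (n+1)) :
    (l ≤ (Finset.univ.filter fun i : Fin (n+1) =>
        i ≠ Fin.last n ∧ x (Equiv.swap j (Fin.last n) i) ≤ x (Equiv.swap j (Fin.last n) (Fin.last n))).card ∧
      (Finset.univ.filter fun i : Fin (n+1) =>
        i ≠ Fin.last n ∧ x (Equiv.swap j (Fin.last n) i) < x (Equiv.swap j (Fin.last n) (Fin.last n))).card < r)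
    ↔ (l ≤ (Finset.univ.filter fun i : Fin (n+1) => i ≠ j ∧ x i ≤ x j).card ∧
      (Finset.univ.filter fun i : Fin (n+1) => i ≠ j ∧ x i < x j).card < r) := by
  have hσ : ∀ Q : ℝ → Prop, ∀ (_ : DecidablePred Q),
      (Finset.univ.filter fun i : Fin (n+1) =>
        i ≠ Fin.last n ∧ Q (x (Equiv.swap j (Fin.last n) i))).card
      = (Finset.univ.filter fun i : Fin (n+1) => i ≠ j ∧ Q (x i)).card := by
    intro Q _
    refine Finset.card_bij (fun i _ => Equiv.swap j (Fin.last n) i) ?_ ?_ ?_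
    · intro i hi
      simp only [Finset.mem_filter, Finset.mem_univ, true_and] at hi ⊢
      refine ⟨?_, hi.2⟩
      intro h
      apply hi.1
      have := congrArg (Equiv.swap j (Fin.last n)) h
      simpa using this
    · intro i _ i' _ h
      exact (Equiv.swap j (Fin.last n)).injective h
    · intro k hk
      simp only [Finset.mem_filter, Finset.mem_univ, true_and] at hk
      refine ⟨Equiv.swap j (Fin.last n) k, ?_, by simp⟩
      simp only [Finset.mem_filter, Finset.mem_univ, true_and, Equiv.swap_apply_self]
      refine ⟨?_, hk.2⟩
      intro h
      apply hk.1
      have := congrArg (Equiv.swap j (Fin.last n)) h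
      simpa using this
  classical
  rw [hσ (fun a => a ≤ x (Equiv.swap j (Fin.last n) (Fin.last n))) inferInstance,
    hσ (fun a => a < x (Equiv.swap j (Fin.last n) (Fin.last n))) inferInstance,
    Equiv.swap_apply_right]

lemma covSet_measurable {n l r : ℕ} (j : Fin (n+1)) :
    MeasurableSet {x : Fin (n+1) → ℝ |
      l ≤ (Finset.univ.filter fun i : Fin (n+1) => i ≠ j ∧ x i ≤ x j).card ∧
      (Finset.univ.filter fun i : Fin (n+1) => i ≠ j ∧ x i < x j).card < r} := by
  classical
  have hcard : ∀ (R : ℝ → ℝ → Prop) (_ : ∀ a b, Decidable (R a b)),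
      (∀ i : Fin (n+1), MeasurableSet {x : Fin (n+1) → ℝ | R (x i) (x j)}) →
      Measurable (fun x : Fin (n+1) → ℝ =>
        (Finset.univ.filter fun i : Fin (n+1) => i ≠ j ∧ R (x i) (x j)).card) := by
    intro R _ hR
    have : (fun x : Fin (n+1) → ℝ =>
        (Finset.univ.filter fun i : Fin (n+1) => i ≠ j ∧ R (x i) (x j)).card)
        = fun x => ∑ i : Fin (n+1), if i ≠ j ∧ R (x i) (x j) then 1 else 0 := by
      funext x
      rw [Finset.card_filter]
    rw [this]
    refine Finset.measurable_sum _ fun i _ => Measurable.ite ?_ measurable_const measurable_const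
    have : {x : Fin (n+1) → ℝ | i ≠ j ∧ R (x i) (x j)}
        = {x : Fin (n+1) → ℝ | i ≠ j} ∩ {x | R (x i) (x j)} := rfl
    exact this ▸ (MeasurableSet.const _).inter (hR i)
  have h1 := hcard (· ≤ ·) (fun a b => inferInstance)
    (fun i => measurableSet_le (measurable_pi_apply i) (measurable_pi_apply j))
  have h2 := hcard (· < ·) (fun a b => inferInstance)
    (fun i => measurableSet_lt (measurable_pi_apply i) (measurable_pi_apply j))
  have heq : {x : Fin (n+1) → ℝ |
      l ≤ (Finset.univ.filter fun i : Fin (n+1) => i ≠ j ∧ x i ≤ x j).card ∧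
      (Finset.univ.filter fun i : Fin (n+1) => i ≠ j ∧ x i < x j).card < r}
      = ((fun x : Fin (n+1) → ℝ =>
          (Finset.univ.filter fun i : Fin (n+1) => i ≠ j ∧ x i ≤ x j).card) ⁻¹' Set.Ici l)
        ∩ ((fun x : Fin (n+1) → ℝ =>
          (Finset.univ.filter fun i : Fin (n+1) => i ≠ j ∧ x i < x j).card) ⁻¹' Set.Iio r) := rfl
  rw [heq]
  exact (h1 .of_discrete).inter (h2 .of_discrete)

open MeasureTheory in
lemma pi_comp_perm_apply {m : ℕ} (ν : Measure ℝ) [MeasureTheory.IsProbabilityMeasure ν]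
    (σ : Equiv.Perm (Fin m)) {s : Set (Fin m → ℝ)} (hs : MeasurableSet s) :
    Measure.pi (fun _ : Fin m => ν) {x | (fun i => x (σ i)) ∈ s}
      = Measure.pi (fun _ : Fin m => ν) s := by
  have hmp := MeasureTheory.measurePreserving_piCongrLeft (fun _ : Fin m => ν) σ.symm
  have hT : ∀ x : Fin m → ℝ, (MeasurableEquiv.piCongrLeft (fun _ : Fin m => ℝ) σ.symm) x
      = fun j => x (σ j) := by
    intro x
    funext j
    conv_lhs => rw [show j = σ.symm (σ j) from (σ.symm_apply_apply j).symm]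
    exact Equiv.piCongrLeft_apply_apply (fun _ : Fin m => ℝ) σ.symm x (σ j)
  have := hmp.measure_preimage hs.nullMeasurableSet
  rw [← this]
  congr 1
  ext x
  simp [hT x]

open MeasureTheory ProbabilityTheory
open scoped ENNReal

theorem stmt2 {Ω : Type*} [MeasurableSpace Ω] (μ : Measure Ω) [IsProbabilityMeasure μ]
    (n : ℕ) (hn : 1 ≤ n) (W : Fin (n + 1) → Ω → ℝ)
    (hindep : iIndepFun W μ)
    (hident : ∀ i, IdentDistrib (W i) (W 0) μ μ)
    (α : ℝ) (hα : α ∈ Set.Ioo (0 : ℝ) 1)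
    (l r : ℕ) (hl : 1 ≤ l) (hlr : l < r) (hrn : r ≤ n)
    (hcov : ((r : ℝ) - l) / ((n : ℝ) + 1) ≥ 1 - α) :
    ENNReal.ofReal (1 - α)
      ≤ μ {ω | orderStat (fun i : Fin n => W i.castSucc ω) l ≤ W (Fin.last n) ω
              ∧ W (Fin.last n) ω ≤ orderStat (fun i : Fin n => W i.castSucc ω) r} := by
  classical
  have hln : l ≤ n := le_of_lt (lt_of_lt_of_le hlr hrn)
  have hr1 : 1 ≤ r := le_of_lt (lt_of_le_of_lt hl hlr)
  have hAE : ∀ i, AEMeasurable (W i) μ := fun i => (hident i).aemeasurable_fst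
  set V : Fin (n+1) → Ω → ℝ := fun i => (hAE i).mk _ with hV
  have hVmeas : ∀ i, Measurable (V i) := fun i => (hAE i).measurable_mk
  have hVae : ∀ i, W i =ᵐ[μ] V i := fun i => (hAE i).ae_eq_mk
  set X : Ω → (Fin (n+1) → ℝ) := fun ω i => V i ω with hX
  have hXmeas : Measurable X := measurable_pi_lambda _ hVmeas
  set ν : Measure ℝ := μ.map (V 0) with hν
  have hνprob : IsProbabilityMeasure ν := Measure.isProbabilityMeasure_map (hVmeas 0).aemeasurable
  have hmapV : ∀ i, μ.map (V i) = ν := by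
    intro i
    rw [hν, ← Measure.map_congr (hVae 0), ← Measure.map_congr (hVae i)]
    exact (hident i).map_eq
  have hpreim : ∀ (i) (s : Set ℝ), μ (V i ⁻¹' s) = μ (W i ⁻¹' s) := by
    intro i s
    apply measure_congr
    filter_upwards [hVae i] with ω hω
    change (V i ω ∈ s) = (W i ω ∈ s)
    rw [hω]
  have hlaw : μ.map X = Measure.pi (fun _ : Fin (n+1) => ν) := by
    refine (Measure.pi_eq (μ := fun _ : Fin (n+1) => ν) ?_).symm
    intro s hs
    rw [Measure.map_apply hXmeas (MeasurableSet.univ_pi hs)]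
    have hpre : X ⁻¹' (Set.univ.pi s) = ⋂ i ∈ Finset.univ, (V i) ⁻¹' (s i) := by
      ext ω
      simp [hX, Set.mem_pi]
    rw [hpre]
    have h1 : μ (⋂ i ∈ Finset.univ, V i ⁻¹' s i) = μ (⋂ i ∈ Finset.univ, W i ⁻¹' s i) := by
      apply measure_congr
      filter_upwards [ae_all_iff.mpr hVae] with ω hω
      show (ω ∈ ⋂ i ∈ Finset.univ, V i ⁻¹' s i) = (ω ∈ ⋂ i ∈ Finset.univ, W i ⁻¹' s i)
      simp only [Set.mem_iInter, Set.mem_preimage, hω]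
    rw [h1, hindep.measure_inter_preimage_eq_mul Finset.univ (fun i _ => hs i)]
    refine Finset.prod_congr rfl fun i _ => ?_
    rw [← hmapV i, Measure.map_apply (hVmeas i) (hs i), hpreim i (s i)]
  set A : Fin (n+1) → Set (Fin (n+1) → ℝ) := fun j => {x |
      l ≤ (Finset.univ.filter fun i : Fin (n+1) => i ≠ j ∧ x i ≤ x j).card ∧
      (Finset.univ.filter fun i : Fin (n+1) => i ≠ j ∧ x i < x j).card < r} with hA
  have hAmeas : ∀ j, MeasurableSet (A j) := fun j => covSet_measurable j
  set π : Measure (Fin (n+1) → ℝ) := Measure.pi (fun _ : Fin (n+1) => ν) with hπ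
  have hπprob : IsProbabilityMeasure π := by
    rw [hπ]
    infer_instance
  have hswap : ∀ j, π (A j) = π (A (Fin.last n)) := by
    intro j
    rw [hπ, ← pi_comp_perm_apply ν (Equiv.swap j (Fin.last n)) (hAmeas (Fin.last n))]
    congr 1
    ext x
    simp only [hA, Set.mem_setOf_eq]
    exact (cov_swap x j).symm
  have hcount : ∀ x : Fin (n+1) → ℝ,
      ((r - l : ℕ) : ℝ≥0∞) ≤ ∑ j : Fin (n+1), (A j).indicator (fun _ => (1:ℝ≥0∞)) x := by
    intro x
    have hcc := card_cov_ge (l := l) (r := r) hrn x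
    calc ((r - l : ℕ) : ℝ≥0∞)
        ≤ ((Finset.univ.filter fun j : Fin (n+1) => x ∈ A j).card : ℝ≥0∞) := by
          exact_mod_cast hcc
    _ = ∑ j : Fin (n+1), (A j).indicator (fun _ => (1:ℝ≥0∞)) x := by
          rw [Finset.card_filter, Nat.cast_sum]
          refine Finset.sum_congr rfl fun j _ => ?_
          by_cases hj : x ∈ A j <;> simp [hj, Set.indicator_apply]
  have hsum : ((r - l : ℕ) : ℝ≥0∞) ≤ ((n : ℝ≥0∞) + 1) * π (A (Fin.last n)) := by
    have h1 : ∑ j : Fin (n+1), π (A j) = ((n : ℝ≥0∞) + 1) * π (A (Fin.last n)) := by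
      rw [Finset.sum_congr rfl (fun j _ => hswap j), Finset.sum_const, Finset.card_univ,
        Fintype.card_fin, nsmul_eq_mul]
      push_cast
      ring
    calc ((r - l : ℕ) : ℝ≥0∞)
        = ∫⁻ _, ((r - l : ℕ) : ℝ≥0∞) ∂π := by
          rw [lintegral_const, measure_univ, mul_one]
    _ ≤ ∫⁻ x, ∑ j : Fin (n+1), (A j).indicator (fun _ => (1:ℝ≥0∞)) x ∂π :=
          lintegral_mono hcount
    _ = ∑ j : Fin (n+1), ∫⁻ x, (A j).indicator (fun _ => (1:ℝ≥0∞)) x ∂π :=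
          lintegral_finset_sum _ (fun j _ => (measurable_one.indicator (hAmeas j)))
    _ = ∑ j : Fin (n+1), π (A j) := by
          exact Finset.sum_congr rfl fun j _ => lintegral_indicator_one (hAmeas j)
    _ = _ := h1
  have hT : μ {ω | orderStat (fun i : Fin n => W i.castSucc ω) l ≤ W (Fin.last n) ω
              ∧ W (Fin.last n) ω ≤ orderStat (fun i : Fin n => W i.castSucc ω) r}
      = π (A (Fin.last n)) := by
    have h1 : μ {ω | orderStat (fun i : Fin n => W i.castSucc ω) l ≤ W (Fin.last n) ω
              ∧ W (Fin.last n) ω ≤ orderStat (fun i : Fin n => W i.castSucc ω) r}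
        = μ (X ⁻¹' A (Fin.last n)) := by
      apply measure_congr
      filter_upwards [ae_all_iff.mpr hVae] with ω hω
      have hx : (fun i : Fin n => W i.castSucc ω) = (fun i : Fin n => X ω ((Fin.last n).succAbove i)) := by
        funext i
        rw [Fin.succAbove_last_apply]
        exact hω _
      change (orderStat (fun i : Fin n => W i.castSucc ω) l ≤ W (Fin.last n) ω
              ∧ W (Fin.last n) ω ≤ orderStat (fun i : Fin n => W i.castSucc ω) r)
          = (X ω ∈ A (Fin.last n))
      rw [hx, hω (Fin.last n)]
      show _ = ((X ω) ∈ A (Fin.last n))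
      rw [eq_iff_iff]
      exact cov_iff hl hln hr1 hrn (X ω) (Fin.last n)
    rw [h1, ← Measure.map_apply hXmeas (hAmeas _), hlaw, hπ]
  rw [hT]
  have hπle : ((r - l : ℕ) : ℝ≥0∞) / ((n : ℝ≥0∞) + 1) ≤ π (A (Fin.last n)) := by
    rw [ENNReal.div_le_iff_le_mul (Or.inl (by simp)) (Or.inl (by simp))]
    rw [mul_comm] at hsum
    exact hsum
  refine le_trans ?_ hπle
  have he1 : ((r - l : ℕ) : ℝ≥0∞) = ENNReal.ofReal ((r : ℝ) - l) := by
    rw [← Nat.cast_sub hlr.le, ENNReal.ofReal_natCast]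
  have he2 : ((n : ℝ≥0∞) + 1) = ENNReal.ofReal ((n : ℝ) + 1) := by
    rw [ENNReal.ofReal_add (by positivity) (by norm_num), ENNReal.ofReal_natCast,
      ENNReal.ofReal_one]
  rw [he1, he2, ← ENNReal.ofReal_div_of_pos (by positivity)]
  exact ENNReal.ofReal_le_ofReal hcov
end

section
/- Let (X_i, Y_i), i = 1, ..., n+1, be i.i.d. with Y_i ≥ 0 a.s., h : ℝ^p → [0,∞) measurable, W_i = Y_i − h(X_i), r = min{n, ⌊(n+1)(1−α)⌋ + 1}, and define the prediction interval I_α^h = [0, W_{(r)} + h(X_{n+1})) if W_{(r)} + h(X_{n+1}) > 0, and I_α^h = [0, min{Y_{(r)}, h(X_{n+1})}) otherwise, where W_{(r)}, Y_{(r)} are the r-th order statistics of W_1,...,W_n and Y_1,...,Y_n respectively. If the distribution of W_1 is atomless, then P(Y_{n+1} ∈ I_α^h) ≥ 1 − α whenever ⌊(n+1)(1−α)⌋ + 1 ≤ n. -/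
open MeasureTheory ProbabilityTheory Finset
open scoped ENNReal


lemma countP_eq_card_filter_ofFn {n : ℕ} (f : Fin n → ℝ) (p : ℝ → Prop) [DecidablePred p] :
    (List.ofFn f).countP (fun a => decide (p a)) = (univ.filter (fun i => p (f i))).card := by
  have h := Multiset.countP_map f (univ.val : Multiset (Fin n)) (p := p)
  rw [Fin.univ_val_map, Multiset.coe_countP] at h
  rw [h, Finset.card_def, Finset.filter_val]

lemma lt_orderStat_iff {n r : ℕ} (hr1 : 1 ≤ r) (hrn : r ≤ n) (w : Fin n → ℝ) (x : ℝ)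
    (hx : ∀ i, w i ≠ x) :
    x < orderStat w r ↔ (univ.filter (fun i => w i < x)).card < r := by
  classical
  set L := (List.ofFn w).insertionSort (· ≤ ·) with hL
  have hperm : List.Perm L (List.ofFn w) := List.perm_insertionSort _ _
  have hlen : L.length = n := by rw [hperm.length_eq, List.length_ofFn]
  have hsort : L.Pairwise (· ≤ ·) := List.pairwise_insertionSort _ _
  have hrlt : r - 1 < L.length := by omega
  have hos : orderStat w r = L.get ⟨r - 1, hrlt⟩ := by
    unfold orderStat; rw [← hL, List.getD_eq_getElem?_getD, List.getElem?_eq_getElem hrlt]; rfl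
  have hmem : ∀ a ∈ L, a ≠ x := by
    intro a ha
    rw [hperm.mem_iff, List.mem_ofFn] at ha
    obtain ⟨i, rfl⟩ := ha
    exact hx i
  set S := univ.filter (fun i : Fin L.length => L.get i < x) with hS
  have hcard : (univ.filter (fun i => w i < x)).card = S.card := by
    rw [← countP_eq_card_filter_ofFn w (fun a => a < x), ← hperm.countP_eq]
    rw [← countP_eq_card_filter_ofFn (fun i : Fin L.length => L.get i) (fun a => a < x)]
    rw [List.ofFn_get]
  rw [hos, hcard]
  constructor
  · intro hlt
    by_contra hc
    push_neg at hc
    by_cases hex : ∃ i ∈ S, r - 1 ≤ (i : ℕ)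
    · obtain ⟨i, hiS, hi⟩ := hex
      have h1 : L.get ⟨r - 1, hrlt⟩ ≤ L.get i :=
        hsort.rel_get_of_le (by simpa [Fin.le_def] using hi)
      have h2 : L.get i < x := by simpa [hS] using hiS
      exact absurd (h1.trans_lt h2) (not_lt.mpr hlt.le)
    · push_neg at hex
      have hsub : S ⊆ Iio ⟨r - 1, hrlt⟩ := by
        intro i hi
        simp only [Finset.mem_Iio, Fin.lt_def]
        exact hex i hi
      have h9 : S.card ≤ r - 1 := by simpa using Finset.card_le_card hsub
      omega
  · intro hc
    by_contra hlt
    push_neg at hlt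
    have hne : L.get ⟨r - 1, hrlt⟩ ≠ x := hmem _ (List.get_mem _ _)
    have hltx : L.get ⟨r - 1, hrlt⟩ < x := lt_of_le_of_ne hlt hne
    have hsub : Iic (⟨r - 1, hrlt⟩ : Fin L.length) ⊆ S := by
      intro i hi
      simp only [Finset.mem_Iic] at hi
      simp only [hS, Finset.mem_filter, Finset.mem_univ, true_and]
      exact (hsort.rel_get_of_le hi).trans_lt hltx
    have h9 : r - 1 + 1 ≤ S.card := by simpa using Finset.card_le_card hsub
    omega

/-- rank helper -/
noncomputable def rnk {m : ℕ} (v : Fin m → ℝ) (j : Fin m) : ℕ :=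
  (univ.filter (fun k => v k < v j)).card

lemma rnk_lt_rnk {m : ℕ} {v : Fin m → ℝ} {j j' : Fin m} (hlt : v j < v j') :
    rnk v j < rnk v j' := by
  classical
  apply Finset.card_lt_card
  have hsub : univ.filter (fun k => v k < v j) ⊆ univ.filter (fun k => v k < v j') := by
    intro k hk
    simp only [Finset.mem_filter] at *
    exact ⟨hk.1, hk.2.trans hlt⟩
  exact (Finset.ssubset_iff_of_subset hsub).mpr ⟨j, by simp [hlt], by simp⟩

lemma rnk_lt_m {m : ℕ} (v : Fin m → ℝ) (j : Fin m) : rnk v j < m := by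
  classical
  have hsub : univ.filter (fun k => v k < v j) ⊆ univ.erase j := by
    intro k hk
    rw [Finset.mem_erase]
    refine ⟨fun hkj => ?_, Finset.mem_univ k⟩
    subst hkj
    exact lt_irrefl _ (Finset.mem_filter.mp hk).2
  have := Finset.card_le_card hsub
  rw [Finset.card_erase_of_mem (Finset.mem_univ j), Finset.card_univ, Fintype.card_fin] at this
  have hm : 0 < m := j.pos
  unfold rnk
  omega

lemma rnk_inj {m : ℕ} {v : Fin m → ℝ} (hv : Function.Injective v) :
    Function.Injective (rnk v) := by
  intro j j' hjj
  rcases lt_trichotomy (v j) (v j') with hlt | heq | hgt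
  · exact absurd hjj (rnk_lt_rnk hlt).ne
  · exact hv heq
  · exact absurd hjj.symm (rnk_lt_rnk hgt).ne

lemma rnk_surj {m : ℕ} {v : Fin m → ℝ} (hv : Function.Injective v) {t : ℕ} (ht : t < m) :
    ∃ j, rnk v j = t := by
  let F : Fin m → Fin m := fun j => ⟨rnk v j, rnk_lt_m v j⟩
  have hF : Function.Injective F := fun a b hab => rnk_inj hv (by simpa [F, Fin.ext_iff] using hab)
  obtain ⟨j, hj⟩ := (Finite.injective_iff_surjective.mp hF) ⟨t, ht⟩
  exact ⟨j, by simpa [F, Fin.ext_iff] using hj⟩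

lemma measurable_rnk {m : ℕ} (j : Fin m) : Measurable (fun v : Fin m → ℝ => rnk v j) := by
  classical
  have : (fun v : Fin m → ℝ => rnk v j)
      = fun v => ∑ k : Fin m, if v k < v j then 1 else 0 := by
    funext v; exact Finset.card_filter _ _
  rw [this]
  exact Finset.measurable_sum _ fun k _ =>
    Measurable.ite (measurableSet_lt (measurable_pi_apply k) (measurable_pi_apply j))
      measurable_const measurable_const

lemma rnk_comp {m : ℕ} (σ : Equiv.Perm (Fin m)) (v : Fin m → ℝ) (j : Fin m) :
    rnk (v ∘ σ) j = rnk v (σ j) := by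
  classical
  exact Finset.card_equiv σ (fun i => by simp)

lemma rnk_last {n : ℕ} (v : Fin (n + 1) → ℝ) :
    rnk v (Fin.last n) = (univ.filter (fun i : Fin n => v i.castSucc < v (Fin.last n))).card := by
  classical
  unfold rnk
  have : univ.filter (fun k : Fin (n+1) => v k < v (Fin.last n))
      = (univ.filter (fun i : Fin n => v i.castSucc < v (Fin.last n))).map Fin.castSuccEmb := by
    ext k
    simp only [Finset.mem_filter, Finset.mem_univ, true_and, Finset.mem_map]
    constructor
    · intro hk
      have hne : k ≠ Fin.last n := fun hh => by subst hh; exact lt_irrefl _ hk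
      obtain ⟨i, rfl⟩ := Fin.exists_castSucc_eq.mpr hne
      exact ⟨i, by simpa using hk, rfl⟩
    · rintro ⟨i, hi, rfl⟩
      simpa using hi
  rw [this, Finset.card_map]

lemma measurePreserving_comp_perm {m : ℕ} (ν : Measure ℝ) [SigmaFinite ν]
    (σ : Equiv.Perm (Fin m)) :
    MeasurePreserving (fun v : Fin m → ℝ => v ∘ σ)
      (Measure.pi (fun _ => ν)) (Measure.pi (fun _ => ν)) := by
  have h := measurePreserving_piCongrLeft (α := fun _ : Fin m => ℝ)
    (μ := fun _ => ν) σ.symm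
  have heq : (fun v : Fin m → ℝ => v ∘ σ)
      = ⇑(MeasurableEquiv.piCongrLeft (fun _ : Fin m => ℝ) σ.symm) := by
    funext v
    funext j
    rw [MeasurableEquiv.coe_piCongrLeft]
    have := Equiv.piCongrLeft_apply_apply (fun _ : Fin m => ℝ) σ.symm v (σ j)
    simpa using this.symm
  rw [heq]
  exact h
lemma key_lemma {n r : ℕ} (hr1 : 1 ≤ r) (hrn : r ≤ n) (ν : Measure ℝ) [IsProbabilityMeasure ν]
    (h0 : ∀ i j : Fin (n + 1), i ≠ j →
      Measure.pi (fun _ : Fin (n + 1) => ν) {v | v i = v j} = 0) :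
    ∃ G : Set (Fin (n + 1) → ℝ), MeasurableSet G ∧
      (∀ v ∈ G, v (Fin.last n) < orderStat (fun i : Fin n => v i.castSucc) r) ∧
      (r : ℝ≥0∞) / ((n : ℝ≥0∞) + 1) ≤ Measure.pi (fun _ : Fin (n + 1) => ν) G := by
  classical
  set m := n + 1 with hm
  set π := Measure.pi (fun _ : Fin m => ν) with hπ
  haveI : IsProbabilityMeasure π := by rw [hπ]; infer_instance
  set D : Set (Fin m → ℝ) := {v | Function.Injective v} with hD
  have hDeq : D = ⋂ (i : Fin m), ⋂ (j : Fin m), ⋂ (_ : i ≠ j), {v : Fin m → ℝ | v i = v j}ᶜ := by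
    ext v
    simp only [hD, Set.mem_setOf_eq, Set.mem_iInter, Set.mem_compl_iff]
    constructor
    · intro hv i j hij hh
      exact hij (hv hh)
    · intro hv a b hab
      by_contra hne
      exact hv a b hne hab
  have hDmeas : MeasurableSet D := by
    rw [hDeq]
    exact MeasurableSet.iInter fun i => MeasurableSet.iInter fun j =>
      MeasurableSet.iInter fun _ =>
        (measurableSet_eq_fun (measurable_pi_apply i) (measurable_pi_apply j)).compl
  have hD1 : π D = 1 := by
    have hc : π Dᶜ = 0 := by
      rw [hDeq, Set.compl_iInter]
      refine measure_iUnion_null fun i => ?_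
      rw [Set.compl_iInter]
      refine measure_iUnion_null fun j => ?_
      rw [Set.compl_iInter]
      refine measure_iUnion_null fun hij => ?_
      simpa using h0 i j hij
    have := measure_add_measure_compl (μ := π) hDmeas
    rw [hc, add_zero, measure_univ] at this
    exact this
  have hAmeas : ∀ (j : Fin m) (t : ℕ),
      MeasurableSet ({v : Fin m → ℝ | rnk v j = t} ∩ D) :=
    fun j t => ((measurable_rnk j) (measurableSet_singleton t)).inter hDmeas
  have hswap : ∀ (j : Fin m) (t : ℕ),
      π ({v | rnk v j = t} ∩ D) = π ({v | rnk v (Fin.last n) = t} ∩ D) := by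
    intro j t
    set σ := Equiv.swap j (Fin.last n) with hσ
    have hmp : MeasurePreserving (fun v : Fin m → ℝ => v ∘ σ) π π :=
      measurePreserving_comp_perm ν σ
    have hpre : (fun v : Fin m → ℝ => v ∘ σ) ⁻¹' ({v | rnk v (Fin.last n) = t} ∩ D)
        = {v | rnk v j = t} ∩ D := by
      ext v
      simp only [Set.mem_preimage, Set.mem_inter_iff, Set.mem_setOf_eq, hD]
      rw [rnk_comp, Equiv.swap_apply_right, Equiv.injective_comp]
    rw [← hpre, hmp.measure_preimage (hAmeas (Fin.last n) t).nullMeasurableSet]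
  have hq : ∀ t : ℕ, t < m → π ({v | rnk v (Fin.last n) = t} ∩ D) = ((m : ℝ≥0∞))⁻¹ := by
    intro t ht
    have hcover : D = ⋃ j ∈ (univ : Finset (Fin m)), ({v | rnk v j = t} ∩ D) := by
      apply Set.Subset.antisymm
      · intro v hv
        obtain ⟨j, hj⟩ := rnk_surj hv ht
        exact Set.mem_biUnion (Finset.mem_univ j) ⟨hj, hv⟩
      · intro v hv
        rcases Set.mem_iUnion₂.mp hv with ⟨j, -, -, hvD⟩
        exact hvD
    have hdisj : (↑(univ : Finset (Fin m)) : Set (Fin m)).PairwiseDisjoint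
        (fun j => {v : Fin m → ℝ | rnk v j = t} ∩ D) := by
      intro j _ j' _ hjj
      rw [Function.onFun, Set.disjoint_left]
      rintro v ⟨hv1, hv2⟩ ⟨hv1', hv2'⟩
      exact hjj (rnk_inj hv2 (hv1.trans hv1'.symm))
    have hsum := measure_biUnion_finset (μ := π) hdisj (fun j _ => hAmeas j t)
    rw [← hcover, hD1] at hsum
    have hconst : ∀ j ∈ (univ : Finset (Fin m)),
        π ({v | rnk v j = t} ∩ D) = π ({v | rnk v (Fin.last n) = t} ∩ D) :=
      fun j _ => hswap j t
    rw [Finset.sum_congr rfl hconst, Finset.sum_const, Finset.card_univ, Fintype.card_fin,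
      nsmul_eq_mul] at hsum
    have hm0 : (m : ℝ≥0∞) ≠ 0 := by simp [hm]
    have hmtop : (m : ℝ≥0∞) ≠ ⊤ := by simp
    rw [((ENNReal.eq_div_iff hm0 hmtop).mpr hsum.symm : _), one_div]
  refine ⟨⋃ t ∈ Finset.range r, ({v | rnk v (Fin.last n) = t} ∩ D),
    MeasurableSet.biUnion (Finset.range r).countable_toSet
      (fun t _ => hAmeas (Fin.last n) t), ?_, ?_⟩
  · intro v hv
    simp only [Set.mem_iUnion, Finset.mem_range, exists_prop] at hv
    obtain ⟨t, htr, ht, hvD⟩ := hv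
    simp only [Set.mem_setOf_eq] at ht
    have hx : ∀ i : Fin n, v i.castSucc ≠ v (Fin.last n) := by
      intro i hh
      exact absurd (hvD hh) (Fin.castSucc_lt_last i).ne
    rw [lt_orderStat_iff hr1 hrn _ _ (fun i hh => hx i hh)]
    rw [show (univ.filter (fun i : Fin n => v i.castSucc < v (Fin.last n))).card
        = rnk v (Fin.last n) from (rnk_last v).symm]
    omega
  · rw [measure_biUnion_finset ?hd (fun t _ => hAmeas (Fin.last n) t)]
    case hd =>
      intro t _ t' _ htt
      rw [Function.onFun, Set.disjoint_left]
      rintro v ⟨hv1, hv2⟩ ⟨hv1', hv2'⟩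
      exact htt (hv1.symm.trans hv1')
    have hval : ∀ t ∈ Finset.range r,
        π ({v | rnk v (Fin.last n) = t} ∩ D) = ((m : ℝ≥0∞))⁻¹ := by
      intro t ht
      rw [Finset.mem_range] at ht
      exact hq t (by omega)
    rw [Finset.sum_congr rfl hval, Finset.sum_const, Finset.card_range, nsmul_eq_mul]
    have hcast : (m : ℝ≥0∞) = (n : ℝ≥0∞) + 1 := by rw [hm]; push_cast; ring
    rw [hcast, div_eq_mul_inv]

theorem stmt11 {Ω : Type*} [MeasurableSpace Ω] (μ : Measure Ω) [IsProbabilityMeasure μ]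
    (n p : ℕ) (hn : 1 ≤ n) (X : Fin (n + 1) → Ω → (Fin p → ℝ)) (Y : Fin (n + 1) → Ω → ℝ)
    (hindep : iIndepFun (fun i ω => (X i ω, Y i ω)) μ)
    (hident : ∀ i j, IdentDistrib (fun ω => (X i ω, Y i ω)) (fun ω => (X j ω, Y j ω)) μ μ)
    (hYpos : ∀ i, ∀ᵐ ω ∂μ, 0 ≤ Y i ω)
    (h : (Fin p → ℝ) → ℝ) (hmeas : Measurable h) (hpos : ∀ t, 0 ≤ h t)
    (W : Fin (n + 1) → Ω → ℝ) (hW : ∀ i ω, W i ω = Y i ω - h (X i ω))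
    (hatomless : ∀ x : ℝ, μ {ω | W 0 ω = x} = 0)
    (α : ℝ) (hα : α ∈ Set.Ioo (0 : ℝ) 1)
    (r : ℕ) (hr : (r : ℤ) = min (n : ℤ) (⌊((n : ℝ) + 1) * (1 - α)⌋ + 1))
    (hrle : ⌊((n : ℝ) + 1) * (1 - α)⌋ + 1 ≤ (n : ℤ)) :
    ENNReal.ofReal (1 - α)
      ≤ μ {ω | 0 ≤ Y (Fin.last n) ω
             ∧ Y (Fin.last n) ω
               < (if 0 < orderStat (fun i : Fin n => W i.castSucc ω) r + h (X (Fin.last n) ω)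
                  then orderStat (fun i : Fin n => W i.castSucc ω) r + h (X (Fin.last n) ω)
                  else min (orderStat (fun i : Fin n => Y i.castSucc ω) r)
                           (h (X (Fin.last n) ω)))} := by
  classical
  -- arithmetic on r
  have hrval : (r : ℤ) = ⌊((n : ℝ) + 1) * (1 - α)⌋ + 1 := by
    rw [hr, min_eq_right hrle]
  have h1α : (0:ℝ) ≤ 1 - α := by linarith [hα.2]
  have hfl0 : (0:ℤ) ≤ ⌊((n : ℝ) + 1) * (1 - α)⌋ :=
    Int.floor_nonneg.mpr (by positivity)
  have hr1 : 1 ≤ r := by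
    have : (1:ℤ) ≤ (r:ℤ) := by omega
    exact_mod_cast this
  have hrn : r ≤ n := by
    have : (r:ℤ) ≤ (n:ℤ) := by omega
    exact_mod_cast this
  -- measurable modifications of W
  set g : (Fin p → ℝ) × ℝ → ℝ := fun q => q.2 - h q.1 with hgdef
  have hgm : Measurable g := measurable_snd.sub (hmeas.comp measurable_fst)
  have hWfun : W = fun i => g ∘ (fun ω => (X i ω, Y i ω)) := by
    funext i ω; exact hW i ω
  have hWae : ∀ i, AEMeasurable (W i) μ := by
    intro i
    rw [hWfun]
    exact hgm.comp_aemeasurable (hident i i).aemeasurable_fst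
  set W' : Fin (n+1) → Ω → ℝ := fun i => (hWae i).mk (W i) with hW'def
  have hW'meas : ∀ i, Measurable (W' i) := fun i => (hWae i).measurable_mk
  have hW'eq : ∀ i, W i =ᵐ[μ] W' i := fun i => (hWae i).ae_eq_mk
  have hindepW : iIndepFun W μ := by
    rw [hWfun]
    exact hindep.comp _ (fun _ => hgm)
  set ν := μ.map (W' 0) with hνdef
  haveI : IsProbabilityMeasure ν := Measure.isProbabilityMeasure_map (hW'meas 0).aemeasurable
  have hmapW : ∀ i, μ.map (W i) = ν := by
    intro i
    have h1 : IdentDistrib (W i) (W 0) μ μ := by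
      rw [hWfun]
      exact (hident i 0).comp hgm
    rw [h1.map_eq, hνdef, Measure.map_congr (hW'eq 0)]
  have hmapW' : ∀ i, μ.map (W' i) = ν := fun i => by
    rw [← Measure.map_congr (hW'eq i), hmapW i]
  have hpre_eq : ∀ (i : Fin (n+1)) (s : Set ℝ), μ (W i ⁻¹' s) = μ (W' i ⁻¹' s) := by
    intro i s
    apply measure_congr
    filter_upwards [hW'eq i] with ω hω
    exact congrArg (fun z => z ∈ s) hω
  set Φ : Ω → (Fin (n+1) → ℝ) := fun ω i => W' i ω with hΦdef
  have hΦm : Measurable Φ := measurable_pi_lambda _ (fun i => hW'meas i)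
  set π := Measure.pi (fun _ : Fin (n+1) => ν) with hπdef
  have hmapΦ : μ.map Φ = π := by
    rw [hπdef]
    refine (Measure.pi_eq ?_).symm
    intro s hs
    rw [Measure.map_apply hΦm (MeasurableSet.univ_pi hs)]
    have hpre : Φ ⁻¹' (Set.univ.pi s) = ⋂ i ∈ (univ : Finset (Fin (n+1))), W' i ⁻¹' (s i) := by
      ext ω
      simp [hΦdef, Set.mem_pi]
    rw [hpre]
    have hpre' : μ (⋂ i ∈ (univ : Finset (Fin (n+1))), W' i ⁻¹' (s i))
        = μ (⋂ i ∈ (univ : Finset (Fin (n+1))), W i ⁻¹' (s i)) := by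
      apply measure_congr
      filter_upwards [MeasureTheory.ae_all_iff.mpr (fun i => hW'eq i)] with ω hω
      rw [eq_iff_iff]
      show ω ∈ (⋂ i ∈ (univ : Finset (Fin (n+1))), W' i ⁻¹' (s i)) ↔ ω ∈ (⋂ i ∈ (univ : Finset (Fin (n+1))), W i ⁻¹' (s i))
      simp only [Set.mem_iInter, Set.mem_preimage]
      constructor
      · intro hh k hk
        rw [hω k]
        exact hh k hk
      · intro hh k hk
        rw [← hω k]
        exact hh k hk
    rw [hpre', hindepW.measure_inter_preimage_eq_mul univ (fun i _ => hs i)]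
    refine Finset.prod_congr rfl (fun i _ => ?_)
    rw [hpre_eq i, ← Measure.map_apply (hW'meas i) (hs i), hmapW' i]
  have hν0 : ∀ x : ℝ, ν {x} = 0 := by
    intro x
    rw [hνdef, Measure.map_apply (hW'meas 0) (measurableSet_singleton x), ← hpre_eq 0 {x}]
    exact hatomless x
  have h0 : ∀ i j : Fin (n + 1), i ≠ j → π {v | v i = v j} = 0 := by
    intro i j hij
    have hmeasset : MeasurableSet {v : Fin (n+1) → ℝ | v i = v j} :=
      measurableSet_eq_fun (measurable_pi_apply i) (measurable_pi_apply j)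
    rw [← hmapΦ, Measure.map_apply hΦm hmeasset]
    have hΦpre : Φ ⁻¹' {v | v i = v j} = {ω | W' i ω = W' j ω} := rfl
    have h2 : μ {ω | W' i ω = W' j ω} = μ {ω | W i ω = W j ω} := by
      apply measure_congr
      filter_upwards [hW'eq i, hW'eq j] with ω hωi hωj
      rw [eq_iff_iff]
      show ω ∈ {ω | W' i ω = W' j ω} ↔ ω ∈ {ω | W i ω = W j ω}
      simp only [Set.mem_setOf_eq]
      rw [hωi, hωj]
    have hpair : AEMeasurable (fun ω => (W i ω, W j ω)) μ := (hWae i).prodMk (hWae j)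
    have hindij : IndepFun (W i) (W j) μ := hindepW.indepFun hij
    have hmapped := (indepFun_iff_map_prod_eq_prod_map_map (hWae i) (hWae j)).mp hindij
    have hdiag : MeasurableSet {q : ℝ × ℝ | q.1 = q.2} :=
      measurableSet_eq_fun measurable_fst measurable_snd
    rw [hΦpre, h2,
      show {ω | W i ω = W j ω} = (fun ω => (W i ω, W j ω)) ⁻¹' {q : ℝ × ℝ | q.1 = q.2} from rfl,
      ← Measure.map_apply_of_aemeasurable hpair hdiag, hmapped, hmapW i, hmapW j,
      Measure.prod_apply hdiag]
    have hz : ∀ x : ℝ, ν (Prod.mk x ⁻¹' {q : ℝ × ℝ | q.1 = q.2}) = 0 := by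
      intro x
      have hxx : (Prod.mk x ⁻¹' {q : ℝ × ℝ | q.1 = q.2}) = {x} := by
        ext y
        simp [eq_comm]
      rw [hxx]
      exact hν0 x
    simp only [hz]
    exact lintegral_zero
  obtain ⟨G, hGmeas, hGprop, hGle⟩ := key_lemma hr1 hrn ν h0
  -- null sets
  have hN1 : μ {ω | ¬ (0 ≤ Y (Fin.last n) ω)} = 0 := by
    have := hYpos (Fin.last n)
    rwa [MeasureTheory.ae_iff] at this
  have hN2 : μ {ω | ¬ ∀ i, W i ω = W' i ω} = 0 := by
    have := MeasureTheory.ae_all_iff.mpr (fun i => hW'eq i)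
    rwa [MeasureTheory.ae_iff] at this
  set T : Set Ω := {ω | 0 ≤ Y (Fin.last n) ω
             ∧ Y (Fin.last n) ω
               < (if 0 < orderStat (fun i : Fin n => W i.castSucc ω) r + h (X (Fin.last n) ω)
                  then orderStat (fun i : Fin n => W i.castSucc ω) r + h (X (Fin.last n) ω)
                  else min (orderStat (fun i : Fin n => Y i.castSucc ω) r)
                           (h (X (Fin.last n) ω)))} with hTdef
  have hsub : Φ ⁻¹' G ⊆ T ∪ ({ω | ¬ (0 ≤ Y (Fin.last n) ω)} ∪ {ω | ¬ ∀ i, W i ω = W' i ω}) := by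
    intro ω hω
    by_cases hy : 0 ≤ Y (Fin.last n) ω
    · by_cases hwe : ∀ i, W i ω = W' i ω
      · left
        have hlt := hGprop _ hω
        have hfeq : (fun i : Fin n => (Φ ω) i.castSucc) = (fun i : Fin n => W i.castSucc ω) := by
          funext i
          exact (hwe i.castSucc).symm
        rw [hfeq] at hlt
        have hwlt : W (Fin.last n) ω < orderStat (fun i : Fin n => W i.castSucc ω) r := by
          have : Φ ω (Fin.last n) = W (Fin.last n) ω := (hwe (Fin.last n)).symm
          rwa [this] at hlt
        have hYlt : Y (Fin.last n) ω
            < orderStat (fun i : Fin n => W i.castSucc ω) r + h (X (Fin.last n) ω) := by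
          have hWlast := hW (Fin.last n) ω
          linarith
        refine ⟨hy, ?_⟩
        rw [if_pos (lt_of_le_of_lt hy hYlt)]
        exact hYlt
      · right; right; exact hwe
    · right; left; exact hy
  -- numeric bound
  have hrr : ((n : ℝ) + 1) * (1 - α) ≤ (r : ℝ) := by
    have hcast := congrArg (fun z : ℤ => (z : ℝ)) hrval
    push_cast at hcast
    have := Int.lt_floor_add_one (((n : ℝ) + 1) * (1 - α))
    linarith
  have hdiv : 1 - α ≤ (r : ℝ) / ((n : ℝ) + 1) := by
    rw [le_div_iff₀ (by positivity)]
    nlinarith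
  have hnum : ENNReal.ofReal (1 - α) ≤ (r : ℝ≥0∞) / ((n : ℝ≥0∞) + 1) := by
    refine le_trans (ENNReal.ofReal_le_ofReal hdiv) ?_
    rw [ENNReal.ofReal_div_of_pos (by positivity),
      show ((n : ℝ) + 1) = ((n + 1 : ℕ) : ℝ) by push_cast; ring,
      ENNReal.ofReal_natCast, ENNReal.ofReal_natCast]
    push_cast
    exact le_rfl
    
  calc ENNReal.ofReal (1 - α) ≤ (r : ℝ≥0∞) / ((n : ℝ≥0∞) + 1) := hnum
    _ ≤ π G := hGle
    _ = μ (Φ ⁻¹' G) := by rw [← hmapΦ, Measure.map_apply hΦm hGmeas]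
    _ ≤ μ (T ∪ ({ω | ¬ (0 ≤ Y (Fin.last n) ω)} ∪ {ω | ¬ ∀ i, W i ω = W' i ω})) :=
        measure_mono hsub
    _ ≤ μ T + μ ({ω | ¬ (0 ≤ Y (Fin.last n) ω)} ∪ {ω | ¬ ∀ i, W i ω = W' i ω}) :=
        measure_union_le _ _
    _ = μ T := by rw [measure_union_null hN1 hN2, add_zero]
end
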